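/- arXiv:1110.5927 — 2 statements merged into one kernel-verified Lean document; each statement's English description precedes it below -/
import Mathlib

section
/- (Varshamov–Gilbert type bound) For every positive integer m with 2^m ≥ 8, there exists a family ε^(0), ..., ε^(M) of elements of {0,1}^{2^m} with ε^(0) = (0,...,0), such that log M ≥ (log 2 / 8) · 2^m and the Hamming distance between any two distinct members is at least 2^m / 8. -/
/-!
Gilbert–Varshamov argument. Write `n = 2 ^ m = 8 (r + 1)`. A largest set of words containing `0`
whose pairwise Hamming distances exceed `r` covers the cube `{0,1}^n` by Hamming balls of radius
`r`, so it has at least `2 ^ n / V` elements, `V = ∑_{k ≤ r} (n choose k)` being the volume of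
such a ball. Comparing `V` with the terms of `(1 + 7) ^ n = ∑ (n choose k) 7 ^ (n - k)` gives
`V * 7 ^ (n - r) ≤ 8 ^ n`, and then `7 ^ 7 > 2 ^ 17` makes `2 ^ n / V > 2 ^ (r + 1) = 2 ^ (n / 8)`.
-/

open Finset

lemma sum_range_choose_mul_pow_le (n r a : ℕ) (hr : r ≤ n) (ha : 0 < a) :
    (∑ k ∈ range (r + 1), n.choose k) * a ^ (n - r) ≤ (a + 1) ^ n := by
  calc (∑ k ∈ range (r + 1), n.choose k) * a ^ (n - r)
      ≤ ∑ k ∈ range (r + 1), n.choose k * a ^ (n - k) := by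
        rw [sum_mul]
        refine sum_le_sum fun k hk => Nat.mul_le_mul_left _ (Nat.pow_le_pow_right ha ?_)
        have := mem_range.1 hk; omega
    _ ≤ ∑ k ∈ range (n + 1), n.choose k * a ^ (n - k) :=
        sum_le_sum_of_subset (range_subset_range.2 (by omega))
    _ = (a + 1) ^ n := by
        rw [add_comm a 1, add_pow]
        exact sum_congr rfl fun k _ => by rw [one_pow, one_mul, Nat.cast_id, mul_comm]

lemma two_pow_mul_sum_choose_lt (r : ℕ) :
    2 ^ (r + 1) * ∑ k ∈ range (r + 1), (8 * (r + 1)).choose k < 2 ^ (8 * (r + 1)) := by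
  set V := ∑ k ∈ range (r + 1), (8 * (r + 1)).choose k
  have hV : V * 7 ^ (7 * r + 8) ≤ 2 ^ (24 * (r + 1)) := by
    have := sum_range_choose_mul_pow_le (8 * (r + 1)) r 7 (by omega) (by norm_num)
    rwa [show 8 * (r + 1) - r = 7 * r + 8 by omega, show 7 + 1 = 2 ^ 3 by rfl, ← pow_mul,
      show 3 * (8 * (r + 1)) = 24 * (r + 1) by ring] at this
  have h7 : 2 ^ (17 * (r + 1)) < 7 ^ (7 * r + 8) :=
    calc 2 ^ (17 * (r + 1)) = (2 ^ 17) ^ (r + 1) := pow_mul _ _ _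
      _ < (7 ^ 7) ^ (r + 1) := Nat.pow_lt_pow_left (by norm_num) (by omega)
      _ = 7 ^ (7 * r + 7) := by rw [← pow_mul]; ring_nf
      _ ≤ 7 ^ (7 * r + 8) := Nat.pow_le_pow_right (by norm_num) (by omega)
  refine Nat.lt_of_mul_lt_mul_right (a := 7 ^ (7 * r + 8)) ?_
  calc 2 ^ (r + 1) * V * 7 ^ (7 * r + 8) ≤ 2 ^ (r + 1) * 2 ^ (24 * (r + 1)) := by
        rw [mul_assoc]; exact Nat.mul_le_mul_left _ hV
    _ = 2 ^ (8 * (r + 1)) * 2 ^ (17 * (r + 1)) := by rw [← pow_add, ← pow_add]; ring_nf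
    _ < 2 ^ (8 * (r + 1)) * 7 ^ (7 * r + 8) := Nat.mul_lt_mul_of_pos_left h7 (by positivity)

lemma card_filter_hammingDist_le {ι : Type*} [Fintype ι] [DecidableEq ι] (c : ι → Bool)
    (r : ℕ) :
    #{y | hammingDist y c ≤ r} ≤ ∑ k ∈ range (r + 1), (Fintype.card ι).choose k := by
  have hinj : Set.InjOn (fun y : ι → Bool => ({i | y i ≠ c i} : Finset ι)) Set.univ := by
    intro y _ y' _ h
    funext i
    have := Finset.ext_iff.1 h i
    simp only [mem_filter, mem_univ, true_and] at this
    revert this; cases y i <;> cases y' i <;> cases c i <;> simp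
  calc #{y | hammingDist y c ≤ r}
      ≤ #((range (r + 1)).biUnion fun k => powersetCard k (univ : Finset ι)) := by
        refine card_le_card_of_injOn _ (fun y hy => ?_) (hinj.mono (Set.subset_univ _))
        simp only [mem_coe, mem_filter, mem_univ, true_and] at hy
        simp only [mem_coe, mem_biUnion, mem_range, mem_powersetCard]
        exact ⟨_, Nat.lt_succ_of_le hy, subset_univ _, rfl⟩
    _ ≤ ∑ k ∈ range (r + 1), #(powersetCard k (univ : Finset ι)) := card_biUnion_le
    _ = ∑ k ∈ range (r + 1), (Fintype.card ι).choose k := by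
        simp only [card_powersetCard, card_univ]

lemma two_pow_card_le_card_mul_sum_choose {ι : Type*} [Fintype ι] [DecidableEq ι]
    (C : Finset (ι → Bool)) (r : ℕ) (hcover : ∀ x, ∃ c ∈ C, hammingDist x c ≤ r) :
    2 ^ Fintype.card ι ≤ #C * ∑ k ∈ range (r + 1), (Fintype.card ι).choose k :=
  calc 2 ^ Fintype.card ι = #(C.biUnion fun c => {y | hammingDist y c ≤ r}) := by
        rw [eq_univ_of_forall fun x => mem_biUnion.2 (by simpa using hcover x)]
        simp
    _ ≤ _ := card_biUnion_le_card_mul _ _ _ fun c _ => card_filter_hammingDist_le c r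

lemma exists_separated_covering_code {α : Type*} [Fintype α] [DecidableEq α]
    (δ : α → α → ℕ) (hδ_comm : ∀ x y, δ x y = δ y x) (hδ_self : ∀ x, δ x x = 0) (x₀ : α) (r : ℕ) :
    ∃ C : Finset α, x₀ ∈ C ∧ (C : Set α).Pairwise (fun x y => r < δ x y) ∧
      ∀ x, ∃ c ∈ C, δ x c ≤ r := by
  classical
  set codes := (univ : Finset (Finset α)).filter
    fun C : Finset α => x₀ ∈ C ∧ (C : Set α).Pairwise (fun x y => r < δ x y)
  have hne : codes.Nonempty := ⟨{x₀}, by simp [codes]⟩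
  obtain ⟨C, hC, hmax⟩ := exists_max_image codes card hne
  simp only [codes, mem_filter, mem_univ, true_and] at hC
  refine ⟨C, hC.1, hC.2, fun x => ?_⟩
  by_contra! hfar
  have hxC : x ∉ C := fun hx => by simpa [hδ_self] using hfar x hx
  have hins : insert x C ∈ codes := by
    simp only [codes, mem_filter, mem_univ, true_and, coe_insert]
    refine ⟨mem_insert_of_mem hC.1, hC.2.insert fun c hc _ => ⟨hfar c hc, ?_⟩⟩
    rw [hδ_comm]; exact hfar c hc
  have := hmax _ hins
  rw [card_insert_of_notMem hxC] at this
  omega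

lemma Finset.exists_fin_injective_zero {α : Type*} {s : Finset α} {M : ℕ}
    (hs : #s = M + 1) {a : α} (ha : a ∈ s) :
    ∃ f : Fin (M + 1) → α, f 0 = a ∧ Function.Injective f ∧ ∀ i, f i ∈ s := by
  let e : s ≃ Fin (M + 1) := Fintype.equivFinOfCardEq (by rw [Fintype.card_coe, hs])
  let σ := Equiv.swap 0 (e ⟨a, ha⟩)
  refine ⟨fun i => e.symm (σ i), by simp [σ], ?_, fun i => (e.symm (σ i)).2⟩
  exact Subtype.val_injective.comp (e.symm.injective.comp σ.injective)

lemma exists_two_pow_eq_eight_mul_succ {m : ℕ} (hm : 8 ≤ 2 ^ m) : ∃ r, 2 ^ m = 8 * (r + 1) := by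
  have h3 : 3 ≤ m := (Nat.pow_le_pow_iff_right (by norm_num)).1 (show 2 ^ 3 ≤ 2 ^ m from hm)
  refine ⟨2 ^ (m - 3) - 1, ?_⟩
  rw [Nat.sub_add_cancel Nat.one_le_two_pow, ← pow_sub_mul_pow 2 h3]
  ring

theorem stmt_10 (m : ℕ) (hm : 8 ≤ 2 ^ m) :
    ∃ (M : ℕ) (ε : Fin (M + 1) → Fin (2 ^ m) → Bool),
      (ε 0 = fun _ => false) ∧
      Real.log M ≥ (Real.log 2 / 8) * 2 ^ m ∧
      ∀ i j : Fin (M + 1), i ≠ j →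
        (2 ^ m : ℝ) / 8 ≤ ((Finset.univ.filter (fun k => ε i k ≠ ε j k)).card : ℝ) := by
  obtain ⟨r, hr⟩ := exists_two_pow_eq_eight_mul_succ hm
  obtain ⟨C, h0C, hsep, hcover⟩ := exists_separated_covering_code
    (fun x y : Fin (2 ^ m) → Bool => hammingDist x y) hammingDist_comm hammingDist_self
    (fun _ => false) r
  have hcard : 2 ^ (r + 1) < #C := by
    have hvol := two_pow_card_le_card_mul_sum_choose C r hcover
    have := two_pow_mul_sum_choose_lt r
    rw [Fintype.card_fin] at hvol
    rw [← hr] at this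
    exact lt_of_mul_lt_mul_right (this.trans_le hvol) (Nat.zero_le _)
  obtain ⟨M, hM⟩ : ∃ M, #C = M + 1 :=
    ⟨#C - 1, (Nat.sub_add_cancel (Nat.one_le_two_pow.trans hcard.le)).symm⟩
  obtain ⟨ε, hε0, hεinj, hεC⟩ := exists_fin_injective_zero hM h0C
  have hr' : (2 ^ m : ℝ) = 8 * (r + 1) := by exact_mod_cast hr
  refine ⟨M, ε, hε0, ?_, fun i j hij => ?_⟩
  · have hM' : (2 : ℝ) ^ (r + 1) ≤ M := by exact_mod_cast Nat.lt_succ_iff.1 (hM ▸ hcard)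
    calc Real.log 2 / 8 * 2 ^ m = Real.log (2 ^ (r + 1)) := by
          rw [hr', Real.log_pow]; push_cast; ring
      _ ≤ Real.log M := Real.log_le_log (by positivity) hM'
  · have hdist : (r : ℝ) + 1 ≤ hammingDist (ε i) (ε j) := by
      exact_mod_cast hsep (hεC i) (hεC j) (hεinj.ne hij)
    rw [hr']
    unfold hammingDist at hdist
    linarith
end

section
/- Let h : [0,1] → ℝ be measurable and g : [0,1] → ℝ be nondecreasing, both square-integrable. Let h* be the increasing rearrangement of h (the quantile function of h(U), U uniform on [0,1]). Then ∫_0^1 (h*(y) - g(y))² dy ≤ ∫_0^1 (h(y) - g(y))² dy. -/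
/-!
The rearrangement `h*` is the quantile function of the law of `h` on `[0, 1]`, so by inverse
transform sampling it has the same distribution as `h`; in particular `∫ h*² = ∫ h²` and
`∫ h* = ∫ h`. Expanding the squares, the claim becomes the Hardy–Littlewood inequality
`∫ g h ≤ ∫ g h*`. Up to a null set the monotone `g` is `c + ν (-∞, y]` for a finite measure `ν`,
and Fubini turns `∫ g (h* - h)` into `∫ (∫_{y ≥ s} (h* - h)) dν(s)`. Each tail integral is
nonnegative by the bathtub principle: with `t = h*(s)`,
`∫_{(s,1)} h ≤ ∫ (h - t)⁺ + t (1 - s) = ∫ (h* - t)⁺ + t (1 - s) = ∫_{(s,1)} h*`.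
-/

open MeasureTheory ProbabilityTheory Set Filter Topology

theorem StieltjesFunction.csInf_le_iff (F : StieltjesFunction ℝ) {y t : ℝ}
    (hne : ∃ z, y ≤ F z) (hbdd : BddBelow {z | y ≤ F z}) :
    sInf {z | y ≤ F z} ≤ t ↔ y ≤ F t := by
  set a := sInf {z | y ≤ F z}
  refine ⟨fun hat => ?_, fun ht => csInf_le hbdd ht⟩
  have hright : ∀ᶠ z in 𝓝[>] a, y ≤ F z := by
    filter_upwards [self_mem_nhdsWithin] with z (hz : a < z)
    obtain ⟨w, hw, hwz⟩ := exists_lt_of_csInf_lt hne hz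
    exact le_trans hw (F.mono hwz.le)
  have hya : y ≤ F a :=
    ge_of_tendsto ((F.right_continuous a).mono Ioi_subset_Ici_self).tendsto hright
  exact hya.trans (F.mono hat)

theorem Real.volume_Iic_inter_Ioo {a b c : ℝ} (hcb : c ≤ b) :
    volume (Iic c ∩ Ioo a b) = ENNReal.ofReal (c - a) := by
  refine le_antisymm ?_ ?_
  · calc volume (Iic c ∩ Ioo a b) ≤ volume (Ioc a c) :=
          measure_mono fun y hy => ⟨hy.2.1, hy.1⟩
      _ = ENNReal.ofReal (c - a) := Real.volume_Ioc
  · calc ENNReal.ofReal (c - a) = volume (Ioo a c) := Real.volume_Ioo.symm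
      _ ≤ volume (Iic c ∩ Ioo a b) :=
          measure_mono fun y hy => ⟨hy.2.le, hy.1, hy.2.trans_le hcb⟩

namespace ProbabilityTheory

noncomputable def quantile (ν : Measure ℝ) (y : ℝ) : ℝ :=
  sInf {z | ENNReal.ofReal y ≤ ν (Iic z)}

variable {ν : Measure ℝ} [IsProbabilityMeasure ν]

theorem quantile_eq_sInf_cdf (y : ℝ) : quantile ν y = sInf {z | y ≤ cdf ν z} := by
  simp only [quantile, ← ofReal_cdf, ENNReal.ofReal_le_ofReal_iff (cdf_nonneg ν _)]

theorem quantile_le_iff {y : ℝ} (hy : y ∈ Ioo 0 1) (t : ℝ) :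
    quantile ν y ≤ t ↔ y ≤ cdf ν t := by
  rw [quantile_eq_sInf_cdf]
  refine (cdf ν).csInf_le_iff ?_ ?_
  · obtain ⟨z, hz⟩ := ((tendsto_cdf_atTop ν).eventually (lt_mem_nhds hy.2)).exists
    exact ⟨z, hz.le⟩
  · obtain ⟨a, ha⟩ := eventually_atBot.1 ((tendsto_cdf_atBot ν).eventually (gt_mem_nhds hy.1))
    refine ⟨a, fun z hz => le_of_not_gt fun hza => ?_⟩
    exact (ha z hza.le).not_ge hz

theorem monotoneOn_quantile : MonotoneOn (quantile ν) (Ioo 0 1) := fun _ ha _ hb hab =>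
  (quantile_le_iff ha _).2 <| hab.trans <| (quantile_le_iff hb _).1 le_rfl

theorem aemeasurable_quantile : AEMeasurable (quantile ν) (volume.restrict (Ioo 0 1)) :=
  aemeasurable_restrict_of_monotoneOn measurableSet_Ioo monotoneOn_quantile

theorem map_quantile_volume : (volume.restrict (Ioo 0 1)).map (quantile ν) = ν := by
  have : IsFiniteMeasure (volume.restrict (Ioo (0 : ℝ) 1)) := isFiniteMeasure_restrict.2 (by simp)
  refine Measure.ext_of_Iic _ _ fun t => ?_
  have hpre : quantile ν ⁻¹' Iic t ∩ Ioo 0 1 = Iic (cdf ν t) ∩ Ioo 0 1 := by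
    ext y
    simp only [mem_inter_iff, mem_preimage, mem_Iic, and_congr_left_iff]
    exact fun hy => quantile_le_iff hy t
  rw [Measure.map_apply_of_aemeasurable aemeasurable_quantile measurableSet_Iic,
    Measure.restrict_apply' measurableSet_Ioo, hpre,
    Real.volume_Iic_inter_Ioo (cdf_le_one ν t), sub_zero, ofReal_cdf]

theorem identDistrib_quantile_map {α : Type*} [MeasurableSpace α] {μ : Measure α}
    [IsProbabilityMeasure μ] {f : α → ℝ} (hf : AEMeasurable f μ) :
    IdentDistrib (quantile (μ.map f)) f (volume.restrict (Ioo 0 1)) μ :=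
  have := Measure.isProbabilityMeasure_map hf
  ⟨aemeasurable_quantile, hf, map_quantile_volume⟩

end ProbabilityTheory

section Rearrangement

variable {a b s : ℝ}

theorem MonotoneOn.exists_ae_eq_add_measureReal_Iic {g : ℝ → ℝ} (hab : a ≤ b)
    (hg : MonotoneOn g (Icc a b)) :
    ∃ (c : ℝ) (ν : Measure ℝ), IsFiniteMeasure ν ∧
      ∀ᵐ y ∂volume.restrict (Icc a b), g y = c + ν.real (Iic y) := by
  have hG : Monotone (IccExtend hab fun y : Icc a b => g y) :=
    (monotoneOn_iff_monotone.1 hg).IccExtend hab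
  set F := hG.stieltjesFunction
  refine ⟨F a, F.measure.restrict (Ioc a b), ⟨?_⟩, ?_⟩
  · rw [Measure.restrict_apply_univ, F.measure_Ioc]
    exact ENNReal.ofReal_lt_top
  -- `g` agrees with the right-continuous `F` off the countably many jumps of its extension.
  have hcont : ∀ᵐ y, ContinuousAt (IccExtend hab fun y : Icc a b => g y) y :=
    hG.countable_not_continuousAt.measure_zero _
  filter_upwards [ae_restrict_mem measurableSet_Icc, ae_restrict_of_ae hcont] with y hy hGy
  have hFy : F y = g y := by
    rw [hG.stieltjesFunction_eq,
      hG.continuousWithinAt_Ioi_iff_rightLim_eq.1 hGy.continuousWithinAt, IccExtend_of_mem hab _ hy]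
  rw [measureReal_def, Measure.restrict_apply measurableSet_Iic, Iic_inter_Ioc_of_le hy.2,
    F.measure_Ioc, ENNReal.toReal_ofReal (sub_nonneg.2 (F.mono hy.1)), hFy]
  ring

theorem integral_measureReal_Iic_mul {μ ν : Measure ℝ} [SFinite μ] [IsFiniteMeasure ν]
    {χ : ℝ → ℝ} (hχ : Integrable χ μ) :
    ∫ y, ν.real (Iic y) * χ y ∂μ = ∫ s, ∫ y in Ici s, χ y ∂μ ∂ν := by
  set F : ℝ → ℝ → ℝ := fun y s => (Iic y).indicator (fun _ => χ y) s
  have hF : Integrable (Function.uncurry F) (μ.prod ν) :=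
    (hχ.comp_fst ν).indicator (measurableSet_le measurable_snd measurable_fst)
  calc ∫ y, ν.real (Iic y) * χ y ∂μ = ∫ y, ∫ s, F y s ∂ν ∂μ := by
        simp only [F, integral_indicator_const _ measurableSet_Iic, smul_eq_mul]
    _ = ∫ s, ∫ y, F y s ∂μ ∂ν := integral_integral_swap hF
    _ = ∫ s, ∫ y in Ici s, χ y ∂μ ∂ν := by
        simp only [F, ← integral_indicator measurableSet_Ici]
        rfl

theorem MonotoneOn.integral_mul_nonneg_of_setIntegral_Ioo_nonneg {g χ : ℝ → ℝ} (hab : a ≤ b)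
    (hg : MonotoneOn g (Icc a b)) (hχ : Integrable χ (volume.restrict (Icc a b)))
    (hmean : ∫ y in Icc a b, χ y = 0) (htail : ∀ s ∈ Ioo a b, 0 ≤ ∫ y in Ioo s b, χ y) :
    0 ≤ ∫ y in Icc a b, g y * χ y := by
  set μ := volume.restrict (Icc a b)
  obtain ⟨c, ν, hν, hrep⟩ := hg.exists_ae_eq_add_measureReal_Iic hab
  have hIci_nonneg : ∀ s, 0 ≤ ∫ y in Ici s, χ y ∂μ := by
    intro s
    have hset : Ici s ∩ Icc a b = Icc (max s a) b := by
      ext y; simp only [mem_inter_iff, mem_Ici, mem_Icc, max_le_iff]; tauto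
    rw [Measure.restrict_restrict measurableSet_Ici, hset, integral_Icc_eq_integral_Ioo]
    rcases le_or_gt s a with hsa | has
    · rw [max_eq_right hsa, ← integral_Icc_eq_integral_Ioo, hmean]
    rw [max_eq_left has.le]
    rcases lt_or_ge s b with hsb | hbs
    · exact htail s ⟨has, hsb⟩
    · simp [Ioo_eq_empty (not_lt.2 hbs)]
  have hcdf : Monotone fun y => ν.real (Iic y) := fun _ _ hxy =>
    measureReal_mono (Iic_subset_Iic.2 hxy)
  have hint : Integrable (fun y => ν.real (Iic y) * χ y) μ :=
    hχ.bdd_mul hcdf.measurable.aestronglyMeasurable (ae_of_all _ fun y => by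
      rw [Real.norm_of_nonneg measureReal_nonneg]; exact measureReal_mono (subset_univ _))
  calc 0 ≤ ∫ s, ∫ y in Ici s, χ y ∂μ ∂ν := integral_nonneg hIci_nonneg
    _ = c * ∫ y, χ y ∂μ + ∫ y, ν.real (Iic y) * χ y ∂μ := by
        rw [hmean, integral_measureReal_Iic_mul hχ]; ring
    _ = ∫ y, g y * χ y ∂μ := by
        rw [← integral_const_mul, ← integral_add (hχ.const_mul c) hint]
        refine integral_congr_ae ?_
        filter_upwards [hrep] with y hy
        rw [hy]; ring

theorem setIntegral_Ioo_sub_const {φ : ℝ → ℝ} (hφ : IntegrableOn φ (Ioo s b)) (hsb : s ≤ b)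
    (t : ℝ) : ∫ y in Ioo s b, (φ y - t) = (∫ y in Ioo s b, φ y) - t * (b - s) := by
  rw [integral_sub hφ (integrable_const t), setIntegral_const, smul_eq_mul,
    Real.volume_real_Ioo_of_le hsb, mul_comm]

theorem setIntegral_Ioo_le_integral_posPart_add {φ : ℝ → ℝ} (hφ : IntegrableOn φ (Icc a b))
    (hs : s ∈ Icc a b) (t : ℝ) :
    ∫ y in Ioo s b, φ y ≤ (∫ y in Icc a b, max (φ y - t) 0) + t * (b - s) := by
  have hsub : Ioo s b ⊆ Icc a b := Ioo_subset_Icc_self.trans (Icc_subset_Icc_left hs.1)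
  have hpos : IntegrableOn (fun y => max (φ y - t) 0) (Icc a b) :=
    (hφ.sub (integrable_const t)).pos_part
  have hle : ∫ y in Ioo s b, (φ y - t) ≤ ∫ y in Icc a b, max (φ y - t) 0 :=
    calc ∫ y in Ioo s b, (φ y - t) ≤ ∫ y in Ioo s b, max (φ y - t) 0 :=
          setIntegral_mono ((hφ.mono_set hsub).sub (integrable_const t)) (hpos.mono_set hsub)
            fun y => le_max_left _ _
      _ ≤ ∫ y in Icc a b, max (φ y - t) 0 :=
          setIntegral_mono_set hpos (ae_of_all _ fun y => le_max_right _ _) hsub.eventuallyLE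
  rw [setIntegral_Ioo_sub_const (hφ.mono_set hsub) hs.2] at hle
  linarith

theorem MonotoneOn.setIntegral_Ioo_eq_integral_posPart_add {ψ : ℝ → ℝ}
    (hψ : MonotoneOn ψ (Ioo a b)) (hψi : IntegrableOn ψ (Icc a b)) (hs : s ∈ Ioo a b) :
    ∫ y in Ioo s b, ψ y = (∫ y in Icc a b, max (ψ y - ψ s) 0) + ψ s * (b - s) := by
  have hsub : Ioo s b ⊆ Ioo a b := Ioo_subset_Ioo_left hs.1.le
  have hzero : ∀ y ∈ Ioo a b \ Ioo s b, max (ψ y - ψ s) 0 = 0 := fun y hy =>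
    max_eq_right <| sub_nonpos.2 <| hψ hy.1 hs <| le_of_not_gt fun hsy => hy.2 ⟨hsy, hy.1.2⟩
  have hpos : ∀ y ∈ Ioo s b, max (ψ y - ψ s) 0 = ψ y - ψ s := fun y hy =>
    max_eq_left <| sub_nonneg.2 <| hψ hs (hsub hy) hy.1.le
  rw [integral_Icc_eq_integral_Ioo,
    setIntegral_eq_of_subset_of_forall_sdiff_eq_zero measurableSet_Ioo hsub hzero,
    setIntegral_congr_fun measurableSet_Ioo hpos,
    setIntegral_Ioo_sub_const (hψi.mono_set (hsub.trans Ioo_subset_Icc_self)) hs.2.le]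
  ring

theorem setIntegral_Ioo_le_of_identDistrib {φ ψ : ℝ → ℝ} (hψ : MonotoneOn ψ (Ioo a b))
    (hid : IdentDistrib ψ φ (volume.restrict (Icc a b)) (volume.restrict (Icc a b)))
    (hφ : IntegrableOn φ (Icc a b)) (hs : s ∈ Ioo a b) :
    ∫ y in Ioo s b, φ y ≤ ∫ y in Ioo s b, ψ y := by
  have hposPart : ∫ y in Icc a b, max (ψ y - ψ s) 0 = ∫ y in Icc a b, max (φ y - ψ s) 0 :=
    (hid.comp ((measurable_id.sub_const (ψ s)).max measurable_const)).integral_eq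
  rw [hψ.setIntegral_Ioo_eq_integral_posPart_add (hid.symm.integrable_snd hφ) hs, hposPart]
  exact setIntegral_Ioo_le_integral_posPart_add hφ (Ioo_subset_Icc_self hs) _

theorem MonotoneOn.integral_mul_sub_nonneg_of_identDistrib {g φ ψ : ℝ → ℝ} (hab : a ≤ b)
    (hg : MonotoneOn g (Icc a b)) (hψ : MonotoneOn ψ (Ioo a b))
    (hid : IdentDistrib ψ φ (volume.restrict (Icc a b)) (volume.restrict (Icc a b)))
    (hφ : IntegrableOn φ (Icc a b)) :
    0 ≤ ∫ y in Icc a b, g y * (ψ y - φ y) := by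
  have hψi : IntegrableOn ψ (Icc a b) := hid.symm.integrable_snd hφ
  refine hg.integral_mul_nonneg_of_setIntegral_Ioo_nonneg hab (hψi.sub hφ) ?_ fun s hs => ?_
  · rw [integral_sub hψi hφ, hid.integral_eq, sub_self]
  · have hsub : Ioo s b ⊆ Icc a b := Ioo_subset_Icc_self.trans (Icc_subset_Icc_left hs.1.le)
    rw [integral_sub (hψi.mono_set hsub) (hφ.mono_set hsub), sub_nonneg]
    exact setIntegral_Ioo_le_of_identDistrib hψ hid hφ hs

end Rearrangement

theorem integral_sub_sq_eq_integral_sub_sq_add {α : Type*} [MeasurableSpace α] {μ : Measure α}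
    {u v g : α → ℝ} (hu : MemLp u 2 μ) (hv : MemLp v 2 μ) (hg : MemLp g 2 μ) :
    ∫ x, (u x - g x) ^ 2 ∂μ = ∫ x, (v x - g x) ^ 2 ∂μ + (∫ x, u x ^ 2 ∂μ - ∫ x, v x ^ 2 ∂μ)
      - 2 * ∫ x, g x * (u x - v x) ∂μ := by
  have hvg : Integrable (fun x => (v x - g x) ^ 2) μ := (hv.sub hg).integrable_sq
  have hsq : Integrable (fun x => u x ^ 2 - v x ^ 2) μ := hu.integrable_sq.sub hv.integrable_sq
  have hsum : Integrable (fun x => (v x - g x) ^ 2 + (u x ^ 2 - v x ^ 2)) μ := hvg.add hsq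
  have hcross : Integrable (fun x => 2 * (g x * (u x - v x))) μ :=
    (hg.integrable_mul (hu.sub hv)).const_mul 2
  calc ∫ x, (u x - g x) ^ 2 ∂μ
      = ∫ x, ((v x - g x) ^ 2 + (u x ^ 2 - v x ^ 2) - 2 * (g x * (u x - v x))) ∂μ :=
        integral_congr_ae (ae_of_all _ fun x => by ring)
    _ = _ := by
        rw [integral_sub hsum hcross, integral_add hvg hsq,
          integral_sub hu.integrable_sq hv.integrable_sq, integral_const_mul]

theorem stmt_15_general (h g : ℝ → ℝ)
    (hg : MonotoneOn g (Set.Icc (0 : ℝ) 1))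
    (hL2h : MemLp h 2 (volume.restrict (Set.Icc (0 : ℝ) 1)))
    (hstar : ℝ → ℝ)
    (hdef : ∀ y, hstar y =
      sInf {z : ℝ | ENNReal.ofReal y ≤ volume {u ∈ Set.Icc (0 : ℝ) 1 | h u ≤ z}}) :
    ∫ y in Set.Icc (0 : ℝ) 1, (hstar y - g y) ^ 2
      ≤ ∫ y in Set.Icc (0 : ℝ) 1, (h y - g y) ^ 2 := by
  set μ := volume.restrict (Icc (0 : ℝ) 1)
  have : IsProbabilityMeasure μ := ⟨by simp [μ]⟩
  have hh : AEMeasurable h μ := hL2h.aestronglyMeasurable.aemeasurable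
  have : IsProbabilityMeasure (μ.map h) := Measure.isProbabilityMeasure_map hh
  have hstar_eq : hstar = quantile (μ.map h) := funext fun y => by
    simp only [hdef, quantile, Measure.map_apply_of_aemeasurable hh measurableSet_Iic,
      μ, Measure.restrict_apply' measurableSet_Icc, inter_comm _ (Icc _ _)]
    rfl
  have hIoo : volume.restrict (Ioo (0 : ℝ) 1) = μ := Measure.restrict_congr_set Ioo_ae_eq_Icc
  have hid : IdentDistrib hstar h μ μ := by
    have := identDistrib_quantile_map hh
    rwa [hIoo, ← hstar_eq] at this
  have hL2hstar : MemLp hstar 2 μ := hid.memLp_iff.2 hL2h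
  have hL2g : MemLp g 2 μ :=
    (hg.memLp_top (isLeast_Icc zero_le_one) (isGreatest_Icc zero_le_one)
      measurableSet_Icc).mono_exponent le_top
  have hcross : 0 ≤ ∫ y in Icc 0 1, g y * (hstar y - h y) :=
    hg.integral_mul_sub_nonneg_of_identDistrib zero_le_one (hstar_eq ▸ monotoneOn_quantile) hid
      (hL2h.integrable one_le_two)
  have hsq : ∫ y in Icc 0 1, hstar y ^ 2 = ∫ y in Icc 0 1, h y ^ 2 :=
    (hid.comp (measurable_id.pow_const 2)).integral_eq
  rw [integral_sub_sq_eq_integral_sub_sq_add hL2hstar hL2h hL2g, hsq]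
  linarith

theorem stmt_15 (h g : ℝ → ℝ) (hmeas : Measurable h)
    (hg : MonotoneOn g (Set.Icc (0 : ℝ) 1))
    (hL2h : MemLp h 2 (volume.restrict (Set.Icc (0 : ℝ) 1)))
    (hL2g : MemLp g 2 (volume.restrict (Set.Icc (0 : ℝ) 1)))
    (hstar : ℝ → ℝ)
    (hdef : ∀ y, hstar y =
      sInf {z : ℝ | ENNReal.ofReal y ≤ volume {u ∈ Set.Icc (0 : ℝ) 1 | h u ≤ z}}) :
    ∫ y in Set.Icc (0 : ℝ) 1, (hstar y - g y) ^ 2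
      ≤ ∫ y in Set.Icc (0 : ℝ) 1, (h y - g y) ^ 2 :=
  stmt_15_general h g hg hL2h hstar hdef
end
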